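/- Let H be a complex Hilbert space, J a countable index set, and let {e_j : j ∈ J} and {e_j^⊥ : j ∈ J} be orthonormal systems in H such that ⟨e_j, e_k^⊥⟩ = 0 for all j, k ∈ J. Let α_j, β_j be complex numbers with α_j·β_j ≠ 0 and |α_j|² + |β_j|² = 1, and set f_j := α_j e_j + β_j e_j^⊥. Let E and F be the orthogonal projections onto the closed linear spans of {e_j} and {f_j} respectively. Then: (i) {f_j : j ∈ J} is an orthonormal system; (ii) E∧F = 0; (iii) each e_j is an eigenvector of EFE with eigenvalue |α_j|²; and (iv) ‖E − F‖ = sup_{j ∈ J} √(1 − |α_j|²). -/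

import Mathlib

/-!
Put `f_j^⊥ := conj β_j • e_j - conj α_j • e_j^⊥`. Then `{f_j, f_j^⊥}` is an orthonormal basis of
the plane `span {e_j, e_j^⊥}`, these planes are mutually orthogonal, and
`e_j = conj α_j • f_j + β_j • f_j^⊥`. Hence `F e_j = conj α_j • f_j`, which gives (iii), and
`(E - F) e_j = β_j • f_j^⊥`, so `‖E - F‖ ≥ |β_j| = √(1 - |α_j|²)`. Conversely, expanding `E x` and
`F x` along `{e_j}` and `{f_j}`, the `j`-th term of `(E - F) x` is
`conj β_j ⟪f_j^⊥, x⟫ • e_j - β_j ⟪f_j, x⟫ • e_j^⊥`; these terms are mutually orthogonal, so Bessel's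
inequality for `{f_j} ∪ {f_j^⊥}` gives `‖(E - F) x‖ ≤ sup_j |β_j| ‖x‖`. Finally a vector in
`ran E ∩ ran F` is orthogonal to every `e_j^⊥` and `f_j^⊥`, hence (as `β_j ≠ 0`) to every `e_j`.
-/

/-- An orthogonal projection: a bounded idempotent self-adjoint operator. -/
def IsOrthogonalProjection {H : Type*} [NormedAddCommGroup H] [InnerProductSpace ℂ H]
    [CompleteSpace H] (E : H →L[ℂ] H) : Prop :=
  IsSelfAdjoint E ∧ E * E = E

open Submodule Set ComplexConjugate
open scoped InnerProductSpace

section OrthonormalSpan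

variable {𝕜 E ι : Type*} [RCLike 𝕜] [NormedAddCommGroup E] [InnerProductSpace 𝕜 E]

theorem mem_orthogonal_closure_span_range_iff {v : ι → E} {x : E} :
    x ∈ (span 𝕜 (range v)).topologicalClosureᗮ ↔ ∀ i, ⟪v i, x⟫_𝕜 = 0 := by
  rw [orthogonal_closure, ← span_singleton_le_iff_mem, ← isOrtho_iff_le, isOrtho_span]
  simpa using forall_congr' fun _ => inner_eq_zero_symm

theorem norm_sum_sq_of_pairwise_inner_eq_zero {c : ι → E}
    (hc : Pairwise fun i j => ⟪c i, c j⟫_𝕜 = 0) (s : Finset ι) :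
    ‖∑ i ∈ s, c i‖ ^ 2 = ∑ i ∈ s, ‖c i‖ ^ 2 := by
  classical
  induction s using Finset.induction_on with
  | empty => simp
  | insert a s has ih =>
    have hperp : ⟪c a, ∑ i ∈ s, c i⟫_𝕜 = 0 := by
      rw [inner_sum]
      exact Finset.sum_eq_zero fun i hi => hc (ne_of_mem_of_not_mem hi has).symm
    rw [Finset.sum_insert has, Finset.sum_insert has, ← ih, sq, sq, sq,
      norm_add_sq_eq_norm_sq_add_norm_sq_of_inner_eq_zero _ _ hperp]

theorem HasSum.norm_sq_of_pairwise_inner_eq_zero {c : ι → E} {y : E} (hy : HasSum c y)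
    (hc : Pairwise fun i j => ⟪c i, c j⟫_𝕜 = 0) : HasSum (fun i => ‖c i‖ ^ 2) (‖y‖ ^ 2) := by
  simpa [HasSum, norm_sum_sq_of_pairwise_inner_eq_zero hc] using hy.norm.pow 2

theorem Orthonormal.hasSum_starProjection_closure_span [CompleteSpace E] {v : ι → E}
    (hv : Orthonormal 𝕜 v) (x : E) :
    HasSum (fun i => ⟪v i, x⟫_𝕜 • v i)
      ((span 𝕜 (range v)).topologicalClosure.starProjection x) := by
  set K := (span 𝕜 (range v)).topologicalClosure
  let w : ι → K := fun i => ⟨v i, le_topologicalClosure _ (subset_span ⟨i, rfl⟩)⟩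
  have hw : Orthonormal 𝕜 w := ⟨fun i => hv.1 i, fun _ _ hij => hv.2 hij⟩
  have hsp : (span 𝕜 (range w))ᗮ = ⊥ := by
    refine eq_bot_iff.mpr fun y hy => ?_
    have hyK : (y : E) ∈ Kᗮ := mem_orthogonal_closure_span_range_iff.mpr fun i =>
      hy (w i) (subset_span ⟨i, rfl⟩)
    simpa using K.inf_orthogonal_eq_bot.le ⟨y.2, hyK⟩
  have := K.subtypeL.hasSum
    ((HilbertBasis.mkOfOrthogonalEqBot hw hsp).hasSum_orthogonalProjectionOnto x)
  rwa [HilbertBasis.coe_mkOfOrthogonalEqBot] at this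

theorem Orthonormal.sum_elim {v w : ι → E} (hv : Orthonormal 𝕜 v) (hw : Orthonormal 𝕜 w)
    (hvw : ∀ i j, ⟪v i, w j⟫_𝕜 = 0) : Orthonormal 𝕜 (Sum.elim v w) := by
  refine ⟨Sum.forall.mpr ⟨hv.1, hw.1⟩, ?_⟩
  rintro (i | i) (j | j) hij
  · exact hv.2 (ne_of_apply_ne Sum.inl hij)
  · exact hvw i j
  · exact inner_eq_zero_symm.mp (hvw j i)
  · exact hw.2 (ne_of_apply_ne Sum.inr hij)

theorem starProjection_closure_span_apply_self [CompleteSpace E] (v : ι → E) (i : ι) :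
    (span 𝕜 (range v)).topologicalClosure.starProjection (v i) = v i :=
  starProjection_eq_self_iff.mpr (le_topologicalClosure _ (subset_span ⟨i, rfl⟩))

theorem starProjection_closure_span_eq_zero_iff [CompleteSpace E] {v : ι → E} {x : E} :
    (span 𝕜 (range v)).topologicalClosure.starProjection x = 0 ↔ ∀ i, ⟪v i, x⟫_𝕜 = 0 := by
  rw [starProjection_apply_eq_zero_iff, mem_orthogonal_closure_span_range_iff]

end OrthonormalSpan

theorem IsOrthogonalProjection.eq_starProjection {H : Type*} [NormedAddCommGroup H]
    [InnerProductSpace ℂ H] [CompleteSpace H] {P : H →L[ℂ] H} (hP : IsOrthogonalProjection P)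
    {K : Submodule ℂ H} [K.HasOrthogonalProjection] (hK : LinearMap.range (P : H →ₗ[ℂ] H) = K) :
    P = K.starProjection :=
  ContinuousLinearMap.IsStarProjection.ext ⟨hP.2, hP.1⟩ isStarProjection_starProjection
    (by rw [range_starProjection]; exact hK)

section RotatedPair

variable {H J : Type*} [NormedAddCommGroup H] [InnerProductSpace ℂ H] {e ebot f : J → H}
  {α β : J → ℂ}

theorem inner_smul_add_smul_eq_ite [DecidableEq J] (he : Orthonormal ℂ e)
    (hebot : Orthonormal ℂ ebot) (hcross : ∀ j k, ⟪e j, ebot k⟫_ℂ = 0) (a b c d : ℂ) (j k : J) :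
    ⟪a • e j + b • ebot j, c • e k + d • ebot k⟫_ℂ =
      if j = k then conj a * c + conj b * d else 0 := by
  simp only [inner_add_left, inner_add_right, inner_smul_left, inner_smul_right,
    orthonormal_iff_ite.mp he, orthonormal_iff_ite.mp hebot, hcross,
    inner_eq_zero_symm.mp (hcross _ _)]
  split_ifs <;> ring

theorem orthonormal_smul_add_smul (he : Orthonormal ℂ e) (hebot : Orthonormal ℂ ebot)
    (hcross : ∀ j k, ⟪e j, ebot k⟫_ℂ = 0) {a b : J → ℂ} (hab : ∀ j, ‖a j‖ ^ 2 + ‖b j‖ ^ 2 = 1)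
    {v : J → H} (hv : ∀ j, v j = a j • e j + b j • ebot j) : Orthonormal ℂ v := by
  classical
  refine orthonormal_iff_ite.mpr fun j k => ?_
  rw [hv, hv, inner_smul_add_smul_eq_ite he hebot hcross]
  split_ifs with hjk
  · subst hjk
    rw [Complex.conj_mul', Complex.conj_mul']
    exact_mod_cast hab j
  · rfl

def fbot (e ebot : J → H) (α β : J → ℂ) (j : J) : H :=
  conj (β j) • e j - conj (α j) • ebot j

theorem fbot_eq_smul_add_smul (j : J) :
    fbot e ebot α β j = conj (β j) • e j + (-conj (α j)) • ebot j := by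
  rw [fbot, neg_smul, sub_eq_add_neg]

theorem orthonormal_fbot (he : Orthonormal ℂ e) (hebot : Orthonormal ℂ ebot)
    (hcross : ∀ j k, ⟪e j, ebot k⟫_ℂ = 0) (hnorm : ∀ j, ‖α j‖ ^ 2 + ‖β j‖ ^ 2 = 1) :
    Orthonormal ℂ (fbot e ebot α β) := by
  refine orthonormal_smul_add_smul he hebot hcross (fun j => ?_) fbot_eq_smul_add_smul
  rw [RCLike.norm_conj, norm_neg, RCLike.norm_conj, add_comm, hnorm]

theorem inner_fbot_eq_zero (he : Orthonormal ℂ e) (hebot : Orthonormal ℂ ebot)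
    (hcross : ∀ j k, ⟪e j, ebot k⟫_ℂ = 0) (hf : ∀ j, f j = α j • e j + β j • ebot j) (j k : J) :
    ⟪f j, fbot e ebot α β k⟫_ℂ = 0 := by
  classical
  rw [hf, fbot_eq_smul_add_smul, inner_smul_add_smul_eq_ite he hebot hcross]
  split_ifs with hjk
  · subst hjk; ring
  · rfl

theorem eq_conj_smul_add_smul_fbot (hnorm : ∀ j, ‖α j‖ ^ 2 + ‖β j‖ ^ 2 = 1)
    (hf : ∀ j, f j = α j • e j + β j • ebot j) (j : J) :
    e j = conj (α j) • f j + β j • fbot e ebot α β j := by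
  have hunit : conj (α j) * α j + β j * conj (β j) = 1 := by
    rw [Complex.conj_mul', Complex.mul_conj']; exact_mod_cast hnorm j
  rw [hf, fbot]
  match_scalars
  · linear_combination -hunit
  · ring

theorem closure_span_inf_closure_span_eq_bot (he : Orthonormal ℂ e) (hebot : Orthonormal ℂ ebot)
    (hcross : ∀ j k, ⟪e j, ebot k⟫_ℂ = 0) (hf : ∀ j, f j = α j • e j + β j • ebot j)
    (hβ : ∀ j, β j ≠ 0) :
    (span ℂ (range e)).topologicalClosure ⊓ (span ℂ (range f)).topologicalClosure = ⊥ := by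
  refine eq_bot_iff.mpr fun x ⟨hxe, hxf⟩ => ?_
  have hebot_x : ∀ j, ⟪ebot j, x⟫_ℂ = 0 := fun j =>
    inner_left_of_mem_orthogonal hxe (mem_orthogonal_closure_span_range_iff.mpr (hcross · j))
  have hfbot_x : ∀ j, ⟪fbot e ebot α β j, x⟫_ℂ = 0 := fun j =>
    inner_left_of_mem_orthogonal hxf (mem_orthogonal_closure_span_range_iff.mpr
      (inner_fbot_eq_zero he hebot hcross hf · j))
  have he_x : ∀ j, ⟪e j, x⟫_ℂ = 0 := fun j => by
    have := hfbot_x j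
    rw [fbot, inner_sub_left, inner_smul_left, inner_smul_left, hebot_x, mul_zero, sub_zero,
      Complex.conj_conj] at this
    exact (mul_eq_zero.mp this).resolve_left (hβ j)
  exact (inf_orthogonal_eq_bot _).le ⟨hxe, mem_orthogonal_closure_span_range_iff.mpr he_x⟩

end RotatedPair

section Projections

variable {H J : Type*} [NormedAddCommGroup H] [InnerProductSpace ℂ H] [CompleteSpace H]
  {e ebot f : J → H} {α β : J → ℂ} (he : Orthonormal ℂ e) (hebot : Orthonormal ℂ ebot)
  (hcross : ∀ j k, ⟪e j, ebot k⟫_ℂ = 0) (hnorm : ∀ j, ‖α j‖ ^ 2 + ‖β j‖ ^ 2 = 1)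
  (hf : ∀ j, f j = α j • e j + β j • ebot j)
include he hebot hcross hnorm hf

local notation "𝐄" => starProjection (topologicalClosure (span ℂ (range e)))
local notation "𝐅" => starProjection (topologicalClosure (span ℂ (range f)))

theorem starProjection_apply_eq_conj_smul (j : J) : 𝐅 (e j) = conj (α j) • f j := by
  have hFfbot : 𝐅 (fbot e ebot α β j) = 0 :=
    starProjection_closure_span_eq_zero_iff.mpr (inner_fbot_eq_zero he hebot hcross hf · j)
  conv_lhs => rw [eq_conj_smul_add_smul_fbot hnorm hf j]
  rw [map_add, map_smul, map_smul, starProjection_closure_span_apply_self, hFfbot, smul_zero,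
    add_zero]

theorem starProjection_mul_starProjection_mul_starProjection_apply (j : J) :
    (𝐄 * 𝐅 * 𝐄) (e j) = ((‖α j‖ ^ 2 : ℝ) : ℂ) • e j := by
  have hEebot : 𝐄 (ebot j) = 0 := starProjection_closure_span_eq_zero_iff.mpr (hcross · j)
  simp only [mul_apply_eq_comp, starProjection_closure_span_apply_self,
    starProjection_apply_eq_conj_smul he hebot hcross hnorm hf, map_smul, hf j, map_add, hEebot,
    smul_zero, add_zero, smul_smul, Complex.conj_mul']
  norm_cast

theorem starProjection_sub_starProjection_apply_self (j : J) :
    (𝐄 - 𝐅) (e j) = β j • fbot e ebot α β j := by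
  rw [sub_apply, starProjection_closure_span_apply_self,
    starProjection_apply_eq_conj_smul he hebot hcross hnorm hf, sub_eq_iff_eq_add']
  exact eq_conj_smul_add_smul_fbot hnorm hf j

theorem hasSum_starProjection_sub_starProjection (x : H) :
    HasSum (fun j => (conj (β j) * ⟪fbot e ebot α β j, x⟫_ℂ) • e j - (β j * ⟪f j, x⟫_ℂ) • ebot j)
      ((𝐄 - 𝐅) x) := by
  have hfon : Orthonormal ℂ f := orthonormal_smul_add_smul he hebot hcross hnorm hf
  rw [sub_apply]
  convert (he.hasSum_starProjection_closure_span x).sub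
    (hfon.hasSum_starProjection_closure_span x) using 1
  funext j
  have he_x : ⟪e j, x⟫_ℂ = α j * ⟪f j, x⟫_ℂ + conj (β j) * ⟪fbot e ebot α β j, x⟫_ℂ := by
    rw [eq_conj_smul_add_smul_fbot hnorm hf j, inner_add_left, inner_smul_left, inner_smul_left,
      Complex.conj_conj]
  rw [he_x, hf j]
  module

theorem norm_starProjection_sub_starProjection_apply_le {s : ℝ} (hs : 0 ≤ s)
    (hβs : ∀ j, ‖β j‖ ≤ s) (x : H) : ‖(𝐄 - 𝐅) x‖ ≤ s * ‖x‖ := by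
  set c : J → H :=
    fun j => (conj (β j) * ⟪fbot e ebot α β j, x⟫_ℂ) • e j - (β j * ⟪f j, x⟫_ℂ) • ebot j
  set w : J → ℝ := fun j => ‖⟪f j, x⟫_ℂ‖ ^ 2 + ‖⟪fbot e ebot α β j, x⟫_ℂ‖ ^ 2
  have hc_orth : Pairwise fun i j => ⟪c i, c j⟫_ℂ = 0 := fun i j hij => by
    simp only [c, inner_sub_left, inner_sub_right, inner_smul_left, inner_smul_right, he.2 hij,
      hebot.2 hij, hcross, inner_eq_zero_symm.mp (hcross _ _), mul_zero, sub_zero]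
  have hc_norm (j : J) : ‖c j‖ ^ 2 = ‖β j‖ ^ 2 * w j := by
    rw [norm_sub_sq (𝕜 := ℂ), inner_smul_left, inner_smul_right, hcross]
    simp only [w, mul_zero, map_zero, sub_zero, norm_smul, norm_mul, RCLike.norm_conj, he.1 j,
      hebot.1 j]
    ring
  have hbessel (t : Finset J) : ∑ j ∈ t, w j ≤ ‖x‖ ^ 2 := by
    have hfg := (orthonormal_smul_add_smul he hebot hcross hnorm hf).sum_elim
      (orthonormal_fbot he hebot hcross hnorm) (inner_fbot_eq_zero he hebot hcross hf)
    simpa [w, Finset.sum_disjSum, Finset.sum_add_distrib] using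
      hfg.sum_inner_products_le (s := t.disjSum t) x
  have hsq : ‖(𝐄 - 𝐅) x‖ ^ 2 ≤ (s * ‖x‖) ^ 2 := by
    refine hasSum_le_of_sum_le ((hasSum_starProjection_sub_starProjection he hebot hcross hnorm hf
      x).norm_sq_of_pairwise_inner_eq_zero hc_orth) fun t => ?_
    calc ∑ j ∈ t, ‖c j‖ ^ 2 ≤ ∑ j ∈ t, s ^ 2 * w j :=
          Finset.sum_le_sum fun j _ => by rw [hc_norm]; gcongr; exact hβs j
      _ ≤ s ^ 2 * ‖x‖ ^ 2 := by rw [← Finset.mul_sum]; gcongr; exact hbessel t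
      _ = (s * ‖x‖) ^ 2 := (mul_pow s ‖x‖ 2).symm
  exact (pow_le_pow_iff_left₀ (norm_nonneg _) (by positivity) two_ne_zero).mp hsq

theorem norm_starProjection_sub_starProjection : ‖𝐄 - 𝐅‖ = ⨆ j, ‖β j‖ := by
  have hβ1 (j : J) : ‖β j‖ ≤ 1 := by
    nlinarith [hnorm j, norm_nonneg (α j), norm_nonneg (β j)]
  have hβs : ∀ j, ‖β j‖ ≤ ⨆ j, ‖β j‖ := le_ciSup ⟨1, forall_mem_range.mpr hβ1⟩
  have hs : 0 ≤ ⨆ j, ‖β j‖ := Real.iSup_nonneg fun j => norm_nonneg _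
  refine le_antisymm (ContinuousLinearMap.opNorm_le_bound _ hs
    (norm_starProjection_sub_starProjection_apply_le he hebot hcross hnorm hf hs hβs))
    (Real.iSup_le (fun j => ?_) (norm_nonneg _))
  calc ‖β j‖ = ‖(𝐄 - 𝐅) (e j)‖ := by
        rw [starProjection_sub_starProjection_apply_self he hebot hcross hnorm hf, norm_smul,
          (orthonormal_fbot he hebot hcross hnorm).1 j, mul_one]
    _ ≤ ‖𝐄 - 𝐅‖ := ContinuousLinearMap.unit_le_opNorm _ _ (he.1 j).le

end Projections

theorem statement15_general {H : Type*} [NormedAddCommGroup H] [InnerProductSpace ℂ H] [CompleteSpace H]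
    {J : Type*} (e ebot : J → H)
    (he : Orthonormal ℂ e) (hebot : Orthonormal ℂ ebot)
    (hcross : ∀ j k, (inner ℂ (e j) (ebot k) : ℂ) = 0)
    (α β : J → ℂ) (hαβ : ∀ j, α j * β j ≠ 0) (hnorm : ∀ j, ‖α j‖ ^ 2 + ‖β j‖ ^ 2 = 1)
    (f : J → H) (hf : ∀ j, f j = α j • e j + β j • ebot j)
    (E F : H →L[ℂ] H) (hE : IsOrthogonalProjection E) (hF : IsOrthogonalProjection F)
    (hEr : LinearMap.range (E : H →ₗ[ℂ] H) =
      (Submodule.span ℂ (Set.range e)).topologicalClosure)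
    (hFr : LinearMap.range (F : H →ₗ[ℂ] H) =
      (Submodule.span ℂ (Set.range f)).topologicalClosure) :
    Orthonormal ℂ f ∧
      (LinearMap.range (E : H →ₗ[ℂ] H) ⊓ LinearMap.range (F : H →ₗ[ℂ] H) = ⊥) ∧
      (∀ j, (E * F * E) (e j) = ((‖α j‖ ^ 2 : ℝ) : ℂ) • e j) ∧
      ‖E - F‖ = ⨆ j, Real.sqrt (1 - ‖α j‖ ^ 2) := by
  have hβ : ∀ j, β j ≠ 0 := fun j => right_ne_zero_of_mul (hαβ j)
  have hsqrt : ∀ j, √(1 - ‖α j‖ ^ 2) = ‖β j‖ := fun j => by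
    rw [← hnorm j, add_sub_cancel_left, Real.sqrt_sq (norm_nonneg _)]
  rw [hEr, hFr, funext hsqrt]
  obtain rfl := hE.eq_starProjection hEr
  obtain rfl := hF.eq_starProjection hFr
  exact ⟨orthonormal_smul_add_smul he hebot hcross hnorm hf,
    closure_span_inf_closure_span_eq_bot he hebot hcross hf hβ,
    starProjection_mul_starProjection_mul_starProjection_apply he hebot hcross hnorm hf,
    norm_starProjection_sub_starProjection he hebot hcross hnorm hf⟩

/-- Let `{e_j}` and `{e_j^⊥}` be mutually orthogonal orthonormal systems in a
complex Hilbert space, indexed by a countable set `J`, let `α_j, β_j ∈ ℂ` with `α_j β_j ≠ 0`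
and `|α_j|² + |β_j|² = 1`, and put `f_j := α_j e_j + β_j e_j^⊥`.  If `E` and `F` are the
orthogonal projections onto the closed spans of `{e_j}` and `{f_j}` respectively, then:
(i) `{f_j}` is an orthonormal system; (ii) `E ∧ F = 0`; (iii) each `e_j` is an eigenvector of
`EFE` with eigenvalue `|α_j|²`; and (iv) `‖E − F‖ = sup_j √(1 − |α_j|²)`. -/
theorem statement15 {H : Type*} [NormedAddCommGroup H] [InnerProductSpace ℂ H] [CompleteSpace H]
    {J : Type*} [Countable J] (e ebot : J → H)
    (he : Orthonormal ℂ e) (hebot : Orthonormal ℂ ebot)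
    (hcross : ∀ j k, (inner ℂ (e j) (ebot k) : ℂ) = 0)
    (α β : J → ℂ) (hαβ : ∀ j, α j * β j ≠ 0) (hnorm : ∀ j, ‖α j‖ ^ 2 + ‖β j‖ ^ 2 = 1)
    (f : J → H) (hf : ∀ j, f j = α j • e j + β j • ebot j)
    (E F : H →L[ℂ] H) (hE : IsOrthogonalProjection E) (hF : IsOrthogonalProjection F)
    (hEr : LinearMap.range (E : H →ₗ[ℂ] H) =
      (Submodule.span ℂ (Set.range e)).topologicalClosure)
    (hFr : LinearMap.range (F : H →ₗ[ℂ] H) =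
      (Submodule.span ℂ (Set.range f)).topologicalClosure) :
    Orthonormal ℂ f ∧
      (LinearMap.range (E : H →ₗ[ℂ] H) ⊓ LinearMap.range (F : H →ₗ[ℂ] H) = ⊥) ∧
      (∀ j, (E * F * E) (e j) = ((‖α j‖ ^ 2 : ℝ) : ℂ) • e j) ∧
      ‖E - F‖ = ⨆ j, Real.sqrt (1 - ‖α j‖ ^ 2) :=
  statement15_general e ebot he hebot hcross α β hαβ hnorm f hf E F hE hF hEr hFr
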